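/- The group presented by ⟨a, b | bab⁻¹ = aba⁻¹⟩ is not isomorphic to ℤ. -/

import Mathlib

/-!
The relation `bab⁻¹ = aba⁻¹` is the braid relation, which the transpositions `(0 1)` and `(0 2)`
of `S₃` satisfy. So `a ↦ (0 1)`, `b ↦ (0 2)` defines a homomorphism to `S₃`, and as these
transpositions do not commute, neither do `a` and `b`; hence the group is not abelian, unlike `ℤ`.
-/

/-- The free group on two generators. -/
abbrev F : Type := FreeGroup (Fin 2)

/-- The generator `a`. -/
def a : F := FreeGroup.of 0

/-- The generator `b`. -/
def b : F := FreeGroup.of 1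

/-- The relator set of `⟨a, b | bab⁻¹ = aba⁻¹⟩`. -/
def rels : Set F := {b * a * b⁻¹ * (a * b * a⁻¹)⁻¹}

def toPerm : PresentedGroup rels →* Equiv.Perm (Fin 3) :=
  PresentedGroup.toGroup (f := ![Equiv.swap 0 1, Equiv.swap 0 2]) <| by
    simp only [rels, Set.mem_singleton_iff, forall_eq, a, b, map_mul, map_inv,
      FreeGroup.lift_apply_of]
    decide

theorem not_commute_generators :
    ¬ Commute (PresentedGroup.of 0 : PresentedGroup rels) (PresentedGroup.of 1) := fun h => by
  have := h.map toPerm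
  simp only [toPerm, PresentedGroup.toGroup.of, commute_iff_eq] at this
  exact absurd this (by decide)

/-- The group presented by `⟨a, b | bab⁻¹ = aba⁻¹⟩` is not isomorphic to `ℤ`. -/
theorem presentedGroup_62_c2c4c6_not_iso_int :
    ¬ Nonempty (PresentedGroup rels ≃* Multiplicative ℤ) := by
  rintro ⟨e⟩
  exact not_commute_generators <| by
    simpa using (Commute.all (e (.of 0)) (e (.of 1))).map e.symm
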